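/- arXiv:0905.0867 — 4 statements merged into one kernel-verified Lean document; each statement's English description precedes it below -/
import Mathlib

section
/- There exists a constant C = C(n) > 0 such that for all sufficiently small δ > 0 the following holds: if K ⊂ ℝⁿ is an origin-symmetric convex body with (1−δ)B∞ⁿ ⊆ K ⊆ B∞ⁿ, then there exists T ∈ GL(n,ℝ) such that (1−Cδ)B∞ⁿ ⊆ T⁻¹(K) ⊆ B∞ⁿ and ±e_j ∈ ∂(T⁻¹K) for every j = 1,…,n. -/
open MeasureTheory RealInnerProductSpace ENNReal Pointwise

noncomputable section

/-- The unit cube `B∞ⁿ = {x : |xᵢ| ≤ 1 ∀ i}`. -/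
def cube (n : ℕ) : Set (EuclideanSpace ℝ (Fin n)) := {x | ∀ i, |x i| ≤ 1}

/-- The standard basis vector `e_j` of `ℝⁿ`. -/
def stdVec (n : ℕ) (j : Fin n) : EuclideanSpace ℝ (Fin n) :=
  EuclideanSpace.single j (1 : ℝ)

/-!
Among the matrices `A` for which `K` lies in the parallelepiped `{x | ∀ i, |(A x) i| ≤ 1}`,
pick one of maximal determinant, i.e. a circumscribed parallelepiped of minimal volume.
Maximality and Hahn–Banach put the columns of `A⁻¹` in `K`, so `T = A⁻¹` sends each `±eⱼ`
to a point of `K`.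

Since `(1 - δ) B∞ⁿ ⊆ K`, the rows of `A` have `ℓ¹`-norm at most `1 + 2δ`, while `det A ≥ 1`.
Expanding `∏ᵢ ∑ⱼ |Aᵢⱼ|` as a sum over all self-maps of the index set, the permutation terms
already add up to at least `1`, so every other term is `O(δ)`; this forces `A` to be
`O(δ)`-close to a signed permutation matrix. Hence the rows of `A⁻¹` have `ℓ¹`-norm
`1 + O(δ)`, i.e. `T B∞ⁿ ⊆ (1 + O(δ)) B∞ⁿ`, which gives `(1 - Cδ) B∞ⁿ ⊆ T⁻¹ K`.
-/

open Finset Matrix Equiv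

section PermanentBounds

variable {ι : Type*} [Fintype ι] [DecidableEq ι] (A : Matrix ι ι ℝ)

theorem abs_det_le_sum_perm_prod_abs :
    |A.det| ≤ ∑ σ : Perm ι, ∏ i, |A i (σ i)| := by
  rw [← det_transpose, det_apply]
  refine (abs_sum_le_sum_abs _ _).trans_eq (sum_congr rfl fun σ _ => ?_)
  rcases Int.units_eq_one_or (Perm.sign σ) with h | h <;> simp [h, abs_prod]

theorem prod_sum_abs_eq_sum_prod_abs :
    ∏ i, ∑ j, |A i j| = ∑ φ : ι → ι, ∏ i, |A i (φ i)| := by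
  rw [prod_univ_sum, Fintype.piFinset_univ]

theorem sum_perm_prod_abs_eq :
    ∑ σ : Perm ι, ∏ i, |A i (σ i)| =
      ∑ φ ∈ univ.map ⟨((⇑) : Perm ι → ι → ι), DFunLike.coe_injective⟩, ∏ i, |A i (φ i)| := by
  rw [sum_map]
  rfl

theorem prod_abs_add_sum_perm_le_prod_sum_abs {φ : ι → ι} (hφ : ¬ Function.Injective φ) :
    ∏ i, |A i (φ i)| + ∑ σ : Perm ι, ∏ i, |A i (σ i)| ≤ ∏ i, ∑ j, |A i j| := by
  have hφ' : φ ∉ univ.map ⟨((⇑) : Perm ι → ι → ι), DFunLike.coe_injective⟩ := by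
    simp only [mem_map, mem_univ, true_and, Function.Embedding.coeFn_mk]
    rintro ⟨σ, rfl⟩
    exact hφ σ.injective
  rw [sum_perm_prod_abs_eq, ← sum_insert (f := fun ψ => ∏ i, |A i (ψ i)|) hφ',
    prod_sum_abs_eq_sum_prod_abs]
  exact sum_le_sum_of_subset_of_nonneg (subset_univ _) fun _ _ _ => by positivity

theorem abs_det_le_prod_sum_abs : |A.det| ≤ ∏ i, ∑ j, |A i j| := by
  refine (abs_det_le_sum_perm_prod_abs A).trans ?_
  rw [sum_perm_prod_abs_eq, prod_sum_abs_eq_sum_prod_abs]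
  exact sum_le_sum_of_subset_of_nonneg (subset_univ _) fun _ _ _ => by positivity

end PermanentBounds

theorem one_add_pow_le_one_add_mul (m : ℕ) {t : ℝ} (h0 : 0 ≤ t) (h1 : t ≤ 1) :
    (1 + t) ^ m ≤ 1 + m * 2 ^ m * t := by
  induction m with
  | zero => simp
  | succ k ih =>
    have h2 : (1 : ℝ) ≤ 2 ^ k := one_le_pow₀ (by norm_num)
    calc (1 + t) ^ (k + 1) = (1 + t) ^ k * (1 + t) := pow_succ _ _
      _ ≤ (1 + k * 2 ^ k * t) * (1 + t) := by gcongr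
      _ ≤ 1 + (k + 1 : ℕ) * 2 ^ (k + 1) * t := by
        push_cast
        rw [pow_succ]
        nlinarith [mul_nonneg (mul_nonneg (Nat.cast_nonneg k) (by positivity : (0 : ℝ) ≤ 2 ^ k))
          (mul_nonneg h0 (sub_nonneg.2 h1)), mul_nonneg h0 (by linarith : (0 : ℝ) ≤ 2 * 2 ^ k - 1)]

section SignedPermutation

variable {ι : Type*} [Fintype ι] {A : Matrix ι ι ℝ} {ε : ℝ}

local notation "N" => Fintype.card ι

theorem prod_sum_abs_le (hε0 : 0 ≤ ε) (hε1 : ε ≤ 1) (hrow : ∀ i, ∑ j, |A i j| ≤ 1 + ε)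
    (t : Finset ι) : ∏ i ∈ t, ∑ j, |A i j| ≤ 1 + N * 2 ^ N * ε :=
  calc ∏ i ∈ t, ∑ j, |A i j| ≤ ∏ _i ∈ t, (1 + ε) :=
        prod_le_prod (fun i _ => by positivity) fun i _ => hrow i
    _ = (1 + ε) ^ #t := prod_const _
    _ ≤ (1 + ε) ^ N := pow_le_pow_right₀ (by linarith) (card_le_univ t)
    _ ≤ 1 + N * 2 ^ N * ε := one_add_pow_le_one_add_mul N hε0 hε1

theorem exists_perm_one_le_factorial_mul_prod [DecidableEq ι] (hdet : 1 ≤ |A.det|) :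
    ∃ σ : Perm ι, 1 ≤ ((N).factorial : ℝ) * ∏ i, |A i (σ i)| := by
  have hsum : ∑ _σ : Perm ι, (((N).factorial : ℝ))⁻¹ ≤ ∑ σ : Perm ι, ∏ i, |A i (σ i)| := by
    rw [sum_const, card_univ, Fintype.card_perm, nsmul_eq_mul,
      mul_inv_cancel₀ (by positivity)]
    exact hdet.trans (abs_det_le_sum_perm_prod_abs A)
  obtain ⟨σ, -, hσ⟩ := exists_le_of_sum_le univ_nonempty hsum
  exact ⟨σ, by rwa [inv_le_iff_one_le_mul₀' (by positivity)] at hσ⟩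

theorem abs_le_of_ne_perm [DecidableEq ι] (hε0 : 0 ≤ ε) (hε1 : ε ≤ 1)
    (hrow : ∀ i, ∑ j, |A i j| ≤ 1 + ε) (hdet : 1 ≤ |A.det|) {σ : Perm ι}
    (hσ : 1 ≤ ((N).factorial : ℝ) * ∏ i, |A i (σ i)|) {i j : ι} (hj : j ≠ σ i) :
    |A i j| ≤ 2 * (N).factorial * (N * 2 ^ N) * ε := by
  set P := ∏ l ∈ univ.erase i, |A l (σ l)|
  have hP0 : 0 ≤ P := prod_nonneg fun l _ => abs_nonneg _
  -- Redirecting row `i` of `σ` to column `j` gives a non-injective map, whose term in the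
  -- expansion of the product of row sums is not counted by the permutation terms.
  have hφ : ¬ Function.Injective (Function.update σ i j) := fun hinj => by
    have hne : σ.symm j ≠ i := fun h => hj (by rw [← h, apply_symm_apply])
    exact hne (hinj (by simp [Function.update_of_ne hne]))
  have hterm : |A i j| * P ≤ N * 2 ^ N * ε := by
    have h := prod_abs_add_sum_perm_le_prod_sum_abs A hφ
    rw [← mul_prod_erase univ _ (mem_univ i)] at h
    have hrest : ∏ l ∈ univ.erase i, |A l (Function.update σ i j l)| = P :=
      prod_congr rfl fun l hl => by rw [Function.update_of_ne (ne_of_mem_erase hl)]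
    simp only [Function.update_self, hrest] at h
    linarith [prod_sum_abs_le hε0 hε1 hrow univ, hdet.trans (abs_det_le_sum_perm_prod_abs A)]
  have hP : 1 ≤ 2 * (N).factorial * P := by
    rw [← mul_prod_erase univ _ (mem_univ i)] at hσ
    have : |A i (σ i)| ≤ 2 :=
      (single_le_sum (fun j _ => abs_nonneg (A i j)) (mem_univ (σ i))).trans
        (by linarith [hrow i])
    nlinarith [mul_le_mul_of_nonneg_right this
      (mul_nonneg (Nat.cast_nonneg (N).factorial) hP0)]
  calc |A i j| ≤ |A i j| * (2 * (N).factorial * P) := le_mul_of_one_le_right (abs_nonneg _) hP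
    _ = 2 * (N).factorial * (|A i j| * P) := by ring
    _ ≤ 2 * (N).factorial * (N * 2 ^ N * ε) := by gcongr
    _ = 2 * (N).factorial * (N * 2 ^ N) * ε := by ring

theorem one_sub_le_sum_abs [DecidableEq ι] (hε0 : 0 ≤ ε) (hε1 : ε ≤ 1)
    (hrow : ∀ i, ∑ j, |A i j| ≤ 1 + ε) (hdet : 1 ≤ |A.det|) (i : ι) :
    1 - 2 * (N * 2 ^ N) * ε ≤ ∑ j, |A i j| := by
  have h := hdet.trans (abs_det_le_prod_sum_abs A)
  rw [← mul_prod_erase univ _ (mem_univ i)] at h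
  have hrest := prod_sum_abs_le hε0 hε1 hrow (univ.erase i)
  have hr0 : 0 ≤ ∑ j, |A i j| := sum_nonneg fun j _ => abs_nonneg _
  have hKε : 0 ≤ N * 2 ^ N * ε := by positivity
  nlinarith [mul_le_mul_of_nonneg_left hrest hr0,
    mul_nonneg (by linarith [hrow i] : 0 ≤ 2 - ∑ j, |A i j|) hKε]

end SignedPermutation

theorem abs_sub_ite_le {x η : ℝ} (hlow : 1 - η ≤ |x|) (hup : |x| ≤ 1 + η) :
    |x - if 0 ≤ x then 1 else -1| ≤ η := by
  rw [abs_le]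
  split_ifs with h
  · rw [abs_of_nonneg h] at hlow hup
    constructor <;> linarith
  · rw [abs_of_neg (not_le.1 h)] at hlow hup
    constructor <;> linarith

theorem exists_signedPerm_near (ι : Type*) [Fintype ι] [DecidableEq ι] :
    ∃ C : ℝ, 0 ≤ C ∧ ∀ (A : Matrix ι ι ℝ) (ε : ℝ), 0 ≤ ε → ε ≤ 1 →
      (∀ i, ∑ j, |A i j| ≤ 1 + ε) → 1 ≤ |A.det| →
      ∃ (σ : Perm ι) (s : ι → ℝ), (∀ i, |s i| = 1) ∧
        ∀ i j, |A i j - if j = σ i then s i else 0| ≤ C * ε := by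
  set N := Fintype.card ι
  set K : ℝ := N * 2 ^ N
  set D : ℝ := 2 * N.factorial * K
  refine ⟨1 + 2 * K + (N + 1) * D, by positivity, fun A ε hε0 hε1 hrow hdet => ?_⟩
  obtain ⟨σ, hσ⟩ := exists_perm_one_le_factorial_mul_prod hdet
  have hoff : ∀ i j, j ≠ σ i → |A i j| ≤ D * ε :=
    fun i j hj => abs_le_of_ne_perm hε0 hε1 hrow hdet hσ hj
  have hdiag : ∀ i, 1 - (2 * K + N * D) * ε ≤ |A i (σ i)| := by
    intro i
    have hsplit := add_sum_erase univ (fun j => |A i j|) (mem_univ (σ i))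
    have hrest : ∑ j ∈ univ.erase (σ i), |A i j| ≤ N * (D * ε) := by
      refine (sum_le_card_nsmul _ _ _ fun j hj => hoff i j (ne_of_mem_erase hj)).trans ?_
      rw [nsmul_eq_mul]
      have : 0 ≤ D * ε := by positivity
      gcongr
      exact_mod_cast card_le_univ _
    linarith [one_sub_le_sum_abs hε0 hε1 hrow hdet i]
  refine ⟨σ, fun i => if 0 ≤ A i (σ i) then 1 else -1,
    fun i => by dsimp only; split_ifs <;> simp, fun i j => ?_⟩
  have hK : 0 ≤ K := by positivity
  have hD : 0 ≤ D := by positivity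
  by_cases hj : j = σ i
  · subst hj
    have hup : |A i (σ i)| ≤ 1 + ε :=
      (single_le_sum (fun j _ => abs_nonneg (A i j)) (mem_univ (σ i))).trans (hrow i)
    simp only [if_true]
    refine abs_sub_ite_le ((hdiag i).trans' ?_) (hup.trans ?_) <;>
      nlinarith [mul_nonneg hD hε0, mul_nonneg hK hε0]
  · rw [if_neg hj, sub_zero]
    refine (hoff i j hj).trans (mul_le_mul_of_nonneg_right ?_ hε0)
    nlinarith [mul_nonneg (Nat.cast_nonneg N : (0 : ℝ) ≤ N) hD]

theorem sum_abs_row_le_of_mul_eq_one {ι : Type*} [Fintype ι] [DecidableEq ι]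
    {A W : Matrix ι ι ℝ} (hWA : W * A = 1) (hW : ∀ i j, |W i j| ≤ 1) {σ : Perm ι}
    {s : ι → ℝ} (hs : ∀ i, |s i| = 1) {η : ℝ}
    (hA : ∀ i j, |A i j - if j = σ i then s i else 0| ≤ η) (i : ι) :
    ∑ j, |W i j| ≤ 1 + Fintype.card ι ^ 2 * η := by
  have hcol : ∀ l, |W i (σ.symm l)| ≤ (if i = l then 1 else 0) + Fintype.card ι * η := by
    intro l
    set E : ι → ℝ := fun m => A m l - if l = σ m then s m else 0
    -- `(W * A) i l = 1 i l`, with `A = P + E` for the signed permutation matrix `P`.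
    have hexp : ∑ m, W i m * E m =
        (if i = l then 1 else 0) - W i (σ.symm l) * s (σ.symm l) := by
      have hWA_il : ∑ m, W i m * A m l = if i = l then 1 else 0 := by
        rw [← mul_apply, hWA, one_apply]
      have hWP_il :
          ∑ m, W i m * (if l = σ m then s m else 0) = W i (σ.symm l) * s (σ.symm l) := by
        rw [sum_eq_single (σ.symm l)]
        · simp
        · intro m _ hm
          rw [if_neg fun h => hm (by rw [h, symm_apply_apply]), mul_zero]
        · simp
      simp only [E, mul_sub, sum_sub_distrib, hWA_il, hWP_il]
    have hE : ∑ m, |W i m * E m| ≤ Fintype.card ι * η := by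
      refine (sum_le_card_nsmul _ _ η fun m _ => ?_).trans_eq (nsmul_eq_mul _ _)
      rw [abs_mul]
      exact (mul_le_of_le_one_left (abs_nonneg _) (hW i m)).trans (hA m l)
    calc |W i (σ.symm l)| = |(if i = l then 1 else 0) - ∑ m, W i m * E m| := by
          rw [hexp, _root_.sub_sub_cancel, abs_mul, hs, mul_one]
      _ ≤ |(if i = l then (1 : ℝ) else 0)| + ∑ m, |W i m * E m| :=
          (abs_sub _ _).trans (by gcongr; exact abs_sum_le_sum_abs _ _)
      _ ≤ (if i = l then 1 else 0) + Fintype.card ι * η := by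
          gcongr
          split_ifs <;> simp
  calc ∑ j, |W i j| = ∑ l, |W i (σ.symm l)| := (Equiv.sum_comp σ.symm _).symm
    _ ≤ ∑ l, ((if i = l then 1 else 0) + Fintype.card ι * η) := sum_le_sum fun l _ => hcol l
    _ = 1 + Fintype.card ι ^ 2 * η := by
        rw [sum_add_distrib, sum_ite_eq, if_pos (mem_univ i), sum_const, card_univ,
          nsmul_eq_mul]
        ring

theorem det_updateRow_eq_det_mul {ι R : Type*} [Fintype ι] [DecidableEq ι] [CommRing R]
    {A : Matrix ι ι R} (hA : IsUnit A.det) (i : ι) (b : ι → R) :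
    (A.updateRow i b).det = A.det * (b ᵥ* A⁻¹) i := by
  rw [← cramer_transpose_apply, cramer_eq_adjugate_mulVec, ← adjugate_transpose,
    mulVec_transpose, Matrix.inv_def, vecMul_smul, Pi.smul_apply, smul_eq_mul, ← mul_assoc,
    Ring.mul_inverse_cancel _ hA, one_mul]

theorem ContinuousLinearMap.apply_eq_sum_stdVec {n : ℕ} (f : EuclideanSpace ℝ (Fin n) →L[ℝ] ℝ)
    (x : EuclideanSpace ℝ (Fin n)) : f x = ∑ l, f (stdVec n l) * x l := by
  conv_lhs => rw [← (EuclideanSpace.basisFun (Fin n) ℝ).sum_repr x]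
  simp [map_sum, stdVec, mul_comm]

section BoundingMatrices

open Filter Topology

variable {n : ℕ} {K : Set (EuclideanSpace ℝ (Fin n))}

theorem mem_smul_cube {r : ℝ} (hr : 0 < r) {x : EuclideanSpace ℝ (Fin n)} :
    x ∈ r • cube n ↔ ∀ i, |x i| ≤ r := by
  rw [Set.mem_smul_set_iff_inv_smul_mem₀ hr.ne']
  refine forall_congr' fun i => ?_
  rw [PiLp.smul_apply, smul_eq_mul, abs_mul, abs_inv, abs_of_pos hr, inv_mul_le_iff₀ hr, mul_one]

theorem mapsTo_toEuclideanLin_smul_cube {W : Matrix (Fin n) (Fin n) ℝ} {ρ r t : ℝ}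
    (hW : ∀ i, ∑ j, |W i j| ≤ ρ) (hr : 0 < r) (ht : 0 < t) (hρrt : ρ * r ≤ t) :
    Set.MapsTo (toEuclideanLin W) (r • cube n) (t • cube n) := by
  intro x hx
  rw [mem_smul_cube hr] at hx
  rw [mem_smul_cube ht]
  intro i
  calc |∑ j, W i j * x j| ≤ ∑ j, |W i j| * r := by
        refine (abs_sum_le_sum_abs _ _).trans (sum_le_sum fun j _ => ?_)
        rw [abs_mul]
        exact mul_le_mul_of_nonneg_left (hx j) (abs_nonneg _)
    _ = (∑ j, |W i j|) * r := (Finset.sum_mul _ _ _).symm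
    _ ≤ ρ * r := mul_le_mul_of_nonneg_right (hW i) hr.le
    _ ≤ t := hρrt

theorem mem_frontier_of_abs_eq_one {s : Set (EuclideanSpace ℝ (Fin n))} (hs : s ⊆ cube n)
    {x : EuclideanSpace ℝ (Fin n)} (hx : x ∈ s) {j : Fin n} (hxj : |x j| = 1) :
    x ∈ frontier s := by
  refine ⟨subset_closure hx, fun hint => ?_⟩
  have hscale : Tendsto (fun t : ℝ => (1 + t) • x) (𝓝[>] 0) (𝓝 x) := by
    have hcont : Continuous fun t : ℝ => (1 + t) • x := by fun_prop
    exact (hcont.tendsto' 0 x (by simp)).mono_left nhdsWithin_le_nhds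
  obtain ⟨t, hts, ht⟩ :=
    ((hscale.eventually (isOpen_interior.mem_nhds hint)).and self_mem_nhdsWithin).exists
  have := hs (interior_subset hts) j
  rw [PiLp.smul_apply, smul_eq_mul, abs_mul, hxj, mul_one,
    abs_of_pos (by linarith : (0 : ℝ) < 1 + t)] at this
  linarith

def boundingMatrices (K : Set (EuclideanSpace ℝ (Fin n))) : Set (Matrix (Fin n) (Fin n) ℝ) :=
  {A | Set.MapsTo (toEuclideanLin A) K (cube n)}

theorem one_mem_boundingMatrices (hK : K ⊆ cube n) : 1 ∈ boundingMatrices K := by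
  intro x hx
  simpa using hK hx

theorem mul_sum_abs_le_of_mem_boundingMatrices {r : ℝ} (hr : 0 ≤ r) (hlow : r • cube n ⊆ K)
    {A : Matrix (Fin n) (Fin n) ℝ} (hA : A ∈ boundingMatrices K) (i : Fin n) :
    r * ∑ j, |A i j| ≤ 1 := by
  set s : EuclideanSpace ℝ (Fin n) := WithLp.toLp 2 fun j => if 0 ≤ A i j then 1 else -1
  have hs : s ∈ cube n := fun j => by
    show |if 0 ≤ A i j then (1 : ℝ) else -1| ≤ 1
    split_ifs <;> simp
  have h := hA (hlow (Set.smul_mem_smul_set hs)) i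
  have hAs : toEuclideanLin A (r • s) i = r * ∑ j, |A i j| := by
    rw [map_smul, PiLp.smul_apply, smul_eq_mul]
    congr 1
    show ∑ j, A i j * s j = _
    refine sum_congr rfl fun j _ => ?_
    show A i j * (if 0 ≤ A i j then 1 else -1) = |A i j|
    split_ifs with hj
    · rw [mul_one, abs_of_nonneg hj]
    · rw [mul_neg_one, abs_of_neg (not_le.1 hj)]
  rwa [hAs, abs_of_nonneg (by positivity)] at h

theorem isCompact_boundingMatrices {r : ℝ} (hr : 0 < r) (hlow : r • cube n ⊆ K) :
    IsCompact (boundingMatrices K) := by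
  have hclosed : IsClosed (boundingMatrices K) := by
    have : boundingMatrices K = ⋂ x ∈ K, ⋂ i, {A | |toEuclideanLin A x i| ≤ 1} := by
      ext A
      simp [boundingMatrices, Set.MapsTo, cube]
    rw [this]
    refine isClosed_biInter fun x _ => isClosed_iInter fun i => isClosed_le ?_ continuous_const
    show Continuous fun A : Matrix (Fin n) (Fin n) ℝ => |∑ j, A i j * x j|
    fun_prop
  refine (isCompact_univ_pi fun _ => isCompact_univ_pi fun _ =>
    isCompact_Icc (a := -r⁻¹) (b := r⁻¹)).of_isClosed_subset
    hclosed fun A hA => ?_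
  simp only [Set.mem_univ_pi, Set.mem_Icc, ← abs_le]
  intro i j
  have h := mul_sum_abs_le_of_mem_boundingMatrices hr.le hlow hA i
  rw [← le_div_iff₀' hr] at h
  exact (single_le_sum (fun j _ => abs_nonneg (A i j)) (mem_univ j)).trans
    (h.trans_eq (one_div r))

theorem toEuclideanLin_inv_stdVec_mem_of_isMaxOn (hKconv : Convex ℝ K) (hKclosed : IsClosed K)
    (hKsym : ∀ x ∈ K, -x ∈ K) (hKne : K.Nonempty) {A : Matrix (Fin n) (Fin n) ℝ}
    (hmax : IsMaxOn det (boundingMatrices K) A) (hA : A ∈ boundingMatrices K)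
    (hdet : 0 < A.det) (j : Fin n) : toEuclideanLin A⁻¹ (stdVec n j) ∈ K := by
  set v := toEuclideanLin A⁻¹ (stdVec n j)
  by_contra hv
  obtain ⟨f, c, hfK, hfv⟩ := geometric_hahn_banach_closed_point hKconv hKclosed hv
  have habs : ∀ x ∈ K, |f x| < c := fun x hx =>
    abs_lt.2 ⟨by linarith [hfK _ (hKsym x hx), map_neg f x], hfK x hx⟩
  obtain ⟨x₀, hx₀⟩ := hKne
  have hc : 0 < c := (abs_nonneg _).trans_lt (habs x₀ hx₀)
  -- Replacing row `j` of `A` by the functional `f / c` keeps `A` bounding but increases `det`.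
  set b : Fin n → ℝ := fun l => f (stdVec n l) / c
  have hb : ∀ x : EuclideanSpace ℝ (Fin n), ∑ l, b l * x l = f x / c := fun x => by
    simp only [b, div_mul_eq_mul_div, ← Finset.sum_div, ← f.apply_eq_sum_stdVec]
  have hbA : A.updateRow j b ∈ boundingMatrices K := by
    intro x hx i
    show |∑ l, A.updateRow j b i l * x l| ≤ 1
    rcases eq_or_ne i j with rfl | hij
    · rw [updateRow_self, hb, abs_div, abs_of_pos hc, div_le_one hc]
      exact (habs x hx).le
    · simp only [updateRow_ne hij]
      exact hA hx i
  have hbv : (b ᵥ* A⁻¹) j = f v / c := by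
    rw [← hb]
    simp [v, vecMul, dotProduct, stdVec]
  have hle := isMaxOn_iff.1 hmax _ hbA
  rw [det_updateRow_eq_det_mul (isUnit_iff_ne_zero.2 hdet.ne'), hbv] at hle
  have : 1 < f v / c := (one_lt_div hc).2 hfv
  nlinarith

end BoundingMatrices

theorem exists_boundingMatrix_inv_sum_abs_le (n : ℕ) :
    ∃ C : ℝ, 0 ≤ C ∧ ∀ (δ : ℝ) (K : Set (EuclideanSpace ℝ (Fin n))), 0 < δ → δ ≤ 1 / 2 →
      Convex ℝ K → IsClosed K → (∀ x ∈ K, -x ∈ K) → (1 - δ) • cube n ⊆ K → K ⊆ cube n →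
      ∃ A ∈ boundingMatrices K, IsUnit A.det ∧ (∀ j, toEuclideanLin A⁻¹ (stdVec n j) ∈ K) ∧
        ∀ i, ∑ j, |A⁻¹ i j| ≤ 1 + C * δ := by
  obtain ⟨C₀, hC₀, hnear⟩ := exists_signedPerm_near (Fin n)
  refine ⟨n ^ 2 * (C₀ * 2), by positivity,
    fun δ K hδ0 hδ hKconv hKclosed hKsym hlow hup => ?_⟩
  have hr : (0 : ℝ) < 1 - δ := by linarith
  obtain ⟨A, hA, hmax⟩ := (isCompact_boundingMatrices hr hlow).exists_isMaxOn
    ⟨1, one_mem_boundingMatrices hup⟩ continuous_id.matrix_det.continuousOn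
  have hdet : 1 ≤ A.det := by simpa using isMaxOn_iff.1 hmax 1 (one_mem_boundingMatrices hup)
  have hKne : K.Nonempty :=
    ⟨_, hlow (Set.smul_mem_smul_set (a := 1 - δ) (show 0 ∈ cube n by simp [cube]))⟩
  have hvert := toEuclideanLin_inv_stdVec_mem_of_isMaxOn hKconv hKclosed hKsym hKne hmax hA
    (by linarith)
  have hrow : ∀ i, ∑ j, |A i j| ≤ 1 + 2 * δ := fun i => by
    have h := mul_sum_abs_le_of_mem_boundingMatrices hr.le hlow hA i
    have h0 : 0 ≤ ∑ j, |A i j| := sum_nonneg fun j _ => abs_nonneg _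
    nlinarith
  obtain ⟨σ, s, hs, hclose⟩ := hnear A (2 * δ) (by positivity) (by linarith) hrow
    (by rwa [abs_of_pos (by linarith)])
  have hW : ∀ i j, |A⁻¹ i j| ≤ 1 := fun i j => by simpa [stdVec] using hup (hvert j) i
  have hunit : IsUnit A.det := isUnit_iff_ne_zero.2 (by linarith)
  refine ⟨A, hA, hunit, hvert, fun i => ?_⟩
  have := sum_abs_row_le_of_mul_eq_one (nonsing_inv_mul A hunit) hW hs hclose i
  rw [Fintype.card_fin] at this
  linarith

/-- Lemma 3: if `(1−δ)B∞ⁿ ⊆ K ⊆ B∞ⁿ`, then there is a linear map `T`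
with `(1−Cδ)B∞ⁿ ⊆ T⁻¹(K) ⊆ B∞ⁿ` and `±e_j ∈ ∂(T⁻¹K)` for all `j`. -/
theorem close_to_min_parallelepiped (n : ℕ) :
    ∃ C : ℝ, 0 < C ∧ ∃ δ₀ : ℝ, 0 < δ₀ ∧
      ∀ δ : ℝ, 0 < δ → δ < δ₀ →
        ∀ K : Set (EuclideanSpace ℝ (Fin n)),
          Convex ℝ K → IsCompact K → (interior K).Nonempty → K = -K →
          (1 - δ) • cube n ⊆ K → K ⊆ cube n →
          ∃ T : EuclideanSpace ℝ (Fin n) ≃ₗ[ℝ] EuclideanSpace ℝ (Fin n),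
            (1 - C * δ) • cube n ⊆ T.symm '' K ∧ T.symm '' K ⊆ cube n ∧
            ∀ j : Fin n, stdVec n j ∈ frontier (T.symm '' K) ∧
              -stdVec n j ∈ frontier (T.symm '' K) := by
  obtain ⟨C, hC, hkey⟩ := exists_boundingMatrix_inv_sum_abs_le n
  refine ⟨C + 2, by linarith, 1 / (C + 2), div_pos one_pos (by linarith),
    fun δ hδ0 hδ K hKconv hKcomp _ hKsym hlow hup => ?_⟩
  have hCδ : (C + 2) * δ < 1 := by rwa [lt_div_iff₀' (by linarith)] at hδ
  have hKneg : ∀ x ∈ K, -x ∈ K := fun x hx => by rw [hKsym]; exact Set.neg_mem_neg.2 hx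
  obtain ⟨A, hA, hunit, hvert, hrows⟩ :=
    hkey δ K hδ0 (by nlinarith) hKconv hKcomp.isClosed hKneg hlow hup
  let T := LinearEquiv.ofLinearMap (re₁₂ := .ids) (re₂₁ := .ids)
    (toEuclideanLin A⁻¹) (toEuclideanLin A)
    (by rw [← toLpLin_mul_same, nonsing_inv_mul A hunit, toLpLin_one])
    (by rw [← toLpLin_mul_same, mul_nonsing_inv A hunit, toLpLin_one])
  have hTK : T.symm '' K ⊆ cube n := hA.image_subset
  have hCδ' : 0 ≤ C * δ := mul_nonneg hC hδ0.le
  have hTcube : Set.MapsTo T ((1 - (C + 2) * δ) • cube n) ((1 - δ) • cube n) :=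
    mapsTo_toEuclideanLin_smul_cube hrows (by linarith) (by linarith)
      (by nlinarith [mul_nonneg hCδ' (by linarith : 0 ≤ (C + 2) * δ)])
  refine ⟨T, fun y hy => ⟨T y, hlow (hTcube hy), T.symm_apply_apply y⟩, hTK, fun j => ⟨?_, ?_⟩⟩
  · exact mem_frontier_of_abs_eq_one hTK ⟨_, hvert j, T.symm_apply_apply _⟩ (j := j)
      (by simp [stdVec])
  · exact mem_frontier_of_abs_eq_one hTK
      ⟨-(T (stdVec n j)), hKneg _ (hvert j), by rw [map_neg, T.symm_apply_apply]⟩ (j := j)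
      (by simp [stdVec])
end
end

section
/- Fix n ≥ 1 and positive reals a₀,…,a_{n−1}. Let 𝓕 be the set of nonempty proper faces of B∞ⁿ and for F ∈ 𝓕 let c_F be its center. For a configuration X = (x_F)_{F∈𝓕} ∈ (ℝⁿ)^𝓕 define g(X) = (1/n!)·Σ_𝔽 |det(x_{F₀}, x_{F₁}, …, x_{F_{n−1}})|, where the sum runs over all flags 𝔽 = (F₀ ⊂ F₁ ⊂ ⋯ ⊂ F_{n−1}) of faces of the cube and det denotes the determinant of the n×n matrix with the listed columns. Let X⁰ = (a_{dim F}·c_F)_{F∈𝓕}. Then g is Fréchet differentiable at X⁰, and for every ΔX = (Δx_F)_{F∈𝓕} satisfying ⟨Δx_F, c_F⟩ = 0 for all F ∈ 𝓕, the derivative satisfies Dg(X⁰)(ΔX) = 0; i.e., ΔX lies in the kernel of the differential of the volume function g at X⁰. -/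
open MeasureTheory RealInnerProductSpace ENNReal Pointwise

noncomputable section

/-- Nonempty proper faces of the cube `B∞ⁿ`, encoded by nonzero sign vectors
`ε ∈ {−1,0,1}ⁿ`: the face is `{x ∈ B∞ⁿ : xᵢ = εᵢ whenever εᵢ ≠ 0}`. -/
def Face (n : ℕ) : Type := {ε : Fin n → SignType // ε ≠ 0}

instance (n : ℕ) : Fintype (Face n) := Subtype.fintype _

/-- The center `c_F` of the face with sign vector `ε` is `ε` itself (as a real vector). -/
def ctr {n : ℕ} (F : Face n) : EuclideanSpace ℝ (Fin n) := WithLp.toLp 2 (fun i => (F.1 i : ℝ))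

/-- The dimension of a face: the number of zero coordinates of its sign vector. -/
def faceDim {n : ℕ} (F : Face n) : ℕ := (Finset.univ.filter fun i => F.1 i = 0).card

/-- Sign vector of the `j`-th member `F_j` of the flag of faces determined by the
vertex sign pattern `s` and the zeroing order `σ`: coordinate `i` is zeroed at step `σ i`. -/
def flagVec {n : ℕ} (s : Fin n → Bool) (σ : Equiv.Perm (Fin n)) (j : Fin n) :
    Fin n → SignType :=
  fun i => if (σ i : ℕ) < (j : ℕ) then 0 else if s i then 1 else -1

theorem flagVec_ne_zero {n : ℕ} (s : Fin n → Bool) (σ : Equiv.Perm (Fin n)) (j : Fin n) :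
    flagVec s σ j ≠ 0 := by
  intro h
  have h1 := congrFun h (σ.symm j)
  simp only [flagVec, Equiv.apply_symm_apply, lt_irrefl, if_false, Pi.zero_apply] at h1
  by_cases hs : s (σ.symm j) <;> simp [hs] at h1

/-- The `j`-th member of the flag determined by `(s, σ)`, as a face of the cube. -/
def flagFace {n : ℕ} (s : Fin n → Bool) (σ : Equiv.Perm (Fin n)) (j : Fin n) : Face n :=
  ⟨flagVec s σ j, flagVec_ne_zero s σ j⟩

/-- The star-shaped polytope `⋃_𝔽 conv{0, x_{F₀}, …, x_{F_{n−1}}}`, the union running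
over all flags `𝔽 = (F₀ ⊂ ⋯ ⊂ F_{n−1})` of faces of the cube. -/
def starPoly {n : ℕ} (x : Face n → EuclideanSpace ℝ (Fin n)) :
    Set (EuclideanSpace ℝ (Fin n)) :=
  ⋃ s : Fin n → Bool, ⋃ σ : Equiv.Perm (Fin n),
    convexHull ℝ (insert 0 (Set.range fun j : Fin n => x (flagFace s σ j)))

/-- The (polytope-volume) function `g(X) = (1/n!)·Σ_𝔽 |det(x_{F₀}, …, x_{F_{n−1}})|`,
summing over all flags of faces of the cube. -/
def gvol (n : ℕ) (X : Face n → EuclideanSpace ℝ (Fin n)) : ℝ :=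
  (1 / n.factorial : ℝ) *
    ∑ s : Fin n → Bool, ∑ σ : Equiv.Perm (Fin n),
      |(Matrix.of fun i j : Fin n => X (flagFace s σ j) i).det|

/-!
At `X⁰` the matrix of the flag `(s, σ)` factors as `D_s · L_σ · D_a`, where `D_s`, `D_a` are
diagonal (vertex signs, resp. `a_j`) and `L_σ` is a row permutation of the lower unitriangular
all-ones matrix. Hence `|det| = ∏ |a_j| ≠ 0`, `|det|` is smooth near `X⁰`, and its differential
is `|det M| · tr (M⁻¹ ·)`, where `(M⁻¹)ⱼᵢ = a_j⁻¹ s_i ([σ i = j] - [σ i + 1 = j])` because the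
inverse of the all-ones lower triangular matrix is `1 - (subdiagonal shift)`.
Summed over all flags both kinds of terms cancel. When `σ i + 1 = j`, coordinate `i` is already
zero on `F_j`, so flipping the vertex sign `s_i` fixes `F_j` and negates the term. When `σ i = j`,
swapping `j` with any `m ≥ j` in `σ` fixes `F_j`; averaging over `m ≥ j` turns the sum into
`Σ_σ ⟪Δx_{F_j}, c_{F_j}⟫ = 0`.
-/

section Jacobi

variable {ι : Type*} [Fintype ι] [DecidableEq ι] {E : Type*} [NormedAddCommGroup E]
  [NormedSpace ℝ E]

variable (ι) in
def Matrix.detRowContinuousMultilinear : ContinuousMultilinearMap ℝ (fun _ : ι => ι → ℝ) ℝ :=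
  (Matrix.detRowAlternating : (ι → ℝ) [⋀^ι]→ₗ[ℝ] ℝ).toMultilinearMap.mkContinuous
    (Fintype.card (Equiv.Perm ι)) fun v => by
      change ‖(Matrix.of v).det‖ ≤ _
      rw [Matrix.det_apply, ← nsmul_eq_mul, ← Finset.card_univ, ← Finset.sum_const]
      refine (norm_sum_le _ _).trans (Finset.sum_le_sum fun σ _ => ?_)
      rw [norm_units_zsmul, norm_prod, ← Equiv.prod_comp σ fun i => ‖v i‖]
      exact Finset.prod_le_prod (fun _ _ => norm_nonneg _) fun i _ =>
        norm_le_pi_norm (v (σ i)) i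

theorem hasFDerivAt_det_columns (c : ι → E →L[ℝ] (ι → ℝ)) (x : E) :
    HasFDerivAt (fun y => (Matrix.of fun i j => c j y i).det)
      (∑ j, ∑ i, (Matrix.of fun i j => c j x i).adjugate j i •
        (ContinuousLinearMap.proj i ∘L c j)) x := by
  have h := HasFDerivAt.multilinear_comp (f := Matrix.detRowContinuousMultilinear ι)
    (g := fun j => c j) (x := x) fun j => (c j).hasFDerivAt
  have hf : (fun y => (Matrix.of fun i j => c j y i).det) =
      fun y => Matrix.detRowContinuousMultilinear ι fun j => c j y :=
    funext fun y => (Matrix.det_transpose _).symm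
  rw [hf]
  refine h.congr_fderiv (ContinuousLinearMap.ext fun v => ?_)
  simp only [_root_.sum_apply, smul_apply, ContinuousLinearMap.comp_apply,
    ContinuousMultilinearMap.toContinuousLinearMap_apply]
  refine Finset.sum_congr rfl fun j _ => ?_
  change ((Matrix.of fun i j => c j x i).transpose.updateRow j (c j v)).det = _
  rw [← Matrix.cramer_transpose_apply, Matrix.transpose_transpose,
    Matrix.cramer_eq_adjugate_mulVec]
  rfl

theorem hasFDerivAt_abs_det_columns (c : ι → E →L[ℝ] (ι → ℝ)) {x : E}
    (hx : (Matrix.of fun i j => c j x i).det ≠ 0) :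
    HasFDerivAt (fun y => |(Matrix.of fun i j => c j y i).det|)
      (|(Matrix.of fun i j => c j x i).det| •
        ∑ j, ∑ i, (Matrix.of fun i j => c j x i)⁻¹ j i •
          (ContinuousLinearMap.proj i ∘L c j)) x := by
  set A := Matrix.of fun i j => c j x i
  have hadj : A.adjugate = A.det • A⁻¹ := by
    rw [Matrix.inv_def, Ring.inverse_eq_inv', smul_smul, mul_inv_cancel₀ hx, one_smul]
  convert (hasFDerivAt_det_columns c x).abs hx using 1
  change _ = (SignType.sign A.det : ℝ) • ∑ j, ∑ i, A.adjugate j i • _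
  simp_rw [hadj, Matrix.smul_apply, smul_eq_mul, mul_smul, ← Finset.smul_sum, smul_smul,
    sign_mul_self]

end Jacobi

section LowerOnes

open Matrix

variable (R : Type*) [CommRing R] (n : ℕ)

def Matrix.lowerOnes : Matrix (Fin n) (Fin n) R := of fun k j => if j ≤ k then 1 else 0

theorem Matrix.det_lowerOnes : (lowerOnes R n).det = 1 := by
  have h : (lowerOnes R n).IsLowerTriangular := fun k j hkj => if_neg (not_le.2 hkj)
  rw [det_of_isLowerTriangular _ h]
  simp [lowerOnes]

theorem Matrix.inv_lowerOnes : (lowerOnes R n)⁻¹ =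
    of fun j k : Fin n => (if k = j then 1 else 0) - if (k : ℕ) + 1 = j then 1 else 0 := by
  refine inv_eq_right_inv (ext fun k m => ?_)
  simp only [lowerOnes, mul_apply, of_apply, mul_sub, Finset.sum_sub_distrib,
    mul_ite, mul_one, mul_zero, Finset.sum_ite_eq, Finset.mem_univ, if_true, one_apply,
    Fin.le_def]
  rw [Fin.sum_univ_eq_sum_range
      (fun i => if (m : ℕ) + 1 = i then if i ≤ (k : ℕ) then (1 : R) else 0 else 0),
    Finset.sum_ite_eq]
  simp only [Finset.mem_range, Fin.ext_iff]
  split_ifs <;> first | omega | simp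

end LowerOnes

section Flags

variable {n : ℕ}

def signOfBool (b : Bool) : ℝ := if b then 1 else -1

theorem signOfBool_mul_self (b : Bool) : signOfBool b * signOfBool b = 1 := by
  cases b <;> norm_num [signOfBool]

theorem signOfBool_not (b : Bool) : signOfBool (!b) = -signOfBool b := by
  cases b <;> norm_num [signOfBool]

theorem ctr_flagFace (s : Fin n → Bool) (σ : Equiv.Perm (Fin n)) (j i : Fin n) :
    ctr (flagFace s σ j) i = if σ i < j then 0 else signOfBool (s i) := by
  change ((flagVec s σ j i : SignType) : ℝ) = _
  by_cases h : σ i < j <;> cases hs : s i <;> simp [flagVec, signOfBool, h, hs]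

theorem faceDim_flagFace (s : Fin n → Bool) (σ : Equiv.Perm (Fin n)) (j : Fin n) :
    faceDim (flagFace s σ j) = j := by
  have h : (Finset.univ.filter fun i => (flagFace s σ j).1 i = 0) =
      (Finset.Iio j).map σ.symm.toEmbedding := by
    ext i
    cases hs : s i <;> simp [flagFace, flagVec, hs]
  rw [faceDim, h, Finset.card_map, Fin.card_Iio]

theorem flagFace_congr {s t : Fin n → Bool} {σ τ : Equiv.Perm (Fin n)} {j : Fin n}
    (hστ : ∀ i, σ i < j ↔ τ i < j) (hst : ∀ i, j ≤ σ i → s i = t i) :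
    flagFace s σ j = flagFace t τ j := by
  refine Subtype.ext (funext fun i => ?_)
  change flagVec s σ j i = flagVec t τ j i
  by_cases h : σ i < j
  · simp [flagVec, Fin.lt_def.mp h, Fin.lt_def.mp ((hστ i).mp h)]
  · simp [flagVec, h, (hστ i).not.mp h, hst i (not_lt.mp h)]

end Flags

section CubeConfig

open Matrix

variable {n : ℕ}

def flagMatrix (X : Face n → EuclideanSpace ℝ (Fin n)) (s : Fin n → Bool)
    (σ : Equiv.Perm (Fin n)) : Matrix (Fin n) (Fin n) ℝ :=
  of fun i j => X (flagFace s σ j) i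

def cubeConfig (a : ℕ → ℝ) : Face n → EuclideanSpace ℝ (Fin n) := fun F => a (faceDim F) • ctr F

theorem flagMatrix_cubeConfig (a : ℕ → ℝ) (s : Fin n → Bool) (σ : Equiv.Perm (Fin n)) :
    flagMatrix (cubeConfig a) s σ = diagonal (fun i => signOfBool (s i)) *
      (lowerOnes ℝ n).submatrix σ id * diagonal (fun j : Fin n => a j) := by
  ext i j
  simp only [flagMatrix, cubeConfig, of_apply, PiLp.smul_apply, smul_eq_mul,
    faceDim_flagFace, ctr_flagFace, mul_diagonal, diagonal_mul,
    submatrix_apply, id, lowerOnes]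
  by_cases h : σ i < j
  · simp [h, not_le.mpr h]
  · simp [h, not_lt.mp h, mul_comm]

theorem abs_det_flagMatrix_cubeConfig (a : ℕ → ℝ) (s : Fin n → Bool) (σ : Equiv.Perm (Fin n)) :
    |(flagMatrix (cubeConfig a) s σ).det| = ∏ j : Fin n, |a j| := by
  rw [flagMatrix_cubeConfig, det_mul, det_mul, det_permute,
    det_lowerOnes, det_diagonal, det_diagonal, abs_mul, abs_mul,
    Finset.abs_prod, Finset.abs_prod]
  have hχ (b : Bool) : |signOfBool b| = 1 := by cases b <;> simp [signOfBool]
  simp [hχ, ← Int.cast_abs]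

theorem inv_flagMatrix_cubeConfig {a : ℕ → ℝ} (ha : ∀ k < n, a k ≠ 0) (s : Fin n → Bool)
    (σ : Equiv.Perm (Fin n)) :
    (flagMatrix (cubeConfig a) s σ)⁻¹ = diagonal (fun j : Fin n => (a j)⁻¹) *
      (lowerOnes ℝ n)⁻¹.submatrix id σ * diagonal (fun i => signOfBool (s i)) := by
  have hL : (lowerOnes ℝ n).submatrix σ id * (lowerOnes ℝ n)⁻¹.submatrix id σ = 1 := by
    rw [show (id : Fin n → Fin n) = Equiv.refl (Fin n) from rfl, submatrix_mul_equiv,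
      mul_nonsing_inv _ (by simp [det_lowerOnes]), submatrix_one_equiv]
  have ha' : diagonal (fun j : Fin n => a j) * diagonal (fun j : Fin n => (a j)⁻¹) = 1 := by
    rw [diagonal_mul_diagonal, ← diagonal_one]
    exact congrArg _ (funext fun j => mul_inv_cancel₀ (ha j j.isLt))
  have hχ : diagonal (fun i => signOfBool (s i)) * diagonal (fun i => signOfBool (s i)) = 1 := by
    rw [diagonal_mul_diagonal, ← diagonal_one]
    exact congrArg _ (funext fun i => signOfBool_mul_self (s i))
  refine inv_eq_right_inv ?_
  simp only [flagMatrix_cubeConfig, Matrix.mul_assoc]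
  rw [← Matrix.mul_assoc (diagonal _) (diagonal _), ha', Matrix.one_mul,
    ← Matrix.mul_assoc ((lowerOnes ℝ n).submatrix σ id), hL, Matrix.one_mul, hχ]

end CubeConfig

section Cancellation

variable {n : ℕ}

theorem sum_signOfBool_mul_flagFace_eq_zero {σ : Equiv.Perm (Fin n)} {i j : Fin n}
    (hij : σ i < j) (ΔX : Face n → EuclideanSpace ℝ (Fin n)) :
    ∑ s : Fin n → Bool, signOfBool (s i) * ΔX (flagFace s σ j) i = 0 := by
  have hflip : Function.Involutive fun s : Fin n → Bool => Function.update s i (!s i) := by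
    intro s
    simp
  have hneg (s : Fin n → Bool) :
      signOfBool (Function.update s i (!s i) i) * ΔX (flagFace (Function.update s i (!s i)) σ j) i =
        -(signOfBool (s i) * ΔX (flagFace s σ j) i) := by
    have hface : flagFace (Function.update s i (!s i)) σ j = flagFace s σ j :=
      flagFace_congr (fun _ => Iff.rfl) fun i' hi' =>
        Function.update_of_ne (by rintro rfl; exact absurd hij (not_lt.mpr hi')) _ _
    rw [Function.update_self, signOfBool_not, neg_mul, hface]
  rw [← self_eq_neg, ← Finset.sum_neg_distrib, ← Equiv.sum_comp hflip.toPerm]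
  exact Finset.sum_congr rfl fun s _ => hneg s

theorem flagFace_swap_mul {s : Fin n → Bool} {σ : Equiv.Perm (Fin n)} {j m : Fin n}
    (hm : j ≤ m) : flagFace s (Equiv.swap j m * σ) j = flagFace s σ j := by
  refine flagFace_congr (fun i => ?_) fun _ _ => rfl
  simp only [Equiv.Perm.mul_apply, Equiv.swap_apply_def]
  split_ifs with h₁ h₂
  · simp [h₁, not_lt.mpr hm]
  · simp [h₂, not_lt.mpr hm]
  · rfl

theorem sum_perm_flagFace_eq_zero {ΔX : Face n → EuclideanSpace ℝ (Fin n)}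
    (hΔX : ∀ F, ⟪ΔX F, ctr F⟫ = 0) (s : Fin n → Bool) (j : Fin n) :
    ∑ σ : Equiv.Perm (Fin n), ∑ i,
      (if σ i = j then signOfBool (s i) * ΔX (flagFace s σ j) i else 0) = 0 := by
  set S : Fin n → ℝ := fun m => ∑ σ : Equiv.Perm (Fin n), ∑ i,
    if σ i = m then signOfBool (s i) * ΔX (flagFace s σ j) i else 0 with hS
  have hSm (m : Fin n) (hm : j ≤ m) : S m = S j := by
    simp only [hS]
    rw [← Equiv.sum_comp (Equiv.mulLeft (Equiv.swap j m))]
    refine Finset.sum_congr rfl fun σ _ => Finset.sum_congr rfl fun i _ => ?_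
    simp only [Equiv.coe_mulLeft, flagFace_swap_mul hm, Equiv.Perm.mul_apply,
      Equiv.swap_apply_eq_iff, Equiv.swap_apply_right]
  have hsum : ∑ m ∈ Finset.Ici j, S m = 0 := by
    simp only [hS]
    rw [Finset.sum_comm]
    refine Finset.sum_eq_zero fun σ _ => ?_
    rw [Finset.sum_comm]
    simp only [Finset.sum_ite_eq, Finset.mem_Ici]
    convert hΔX (flagFace s σ j) using 1
    rw [PiLp.inner_apply]
    refine Finset.sum_congr rfl fun i _ => ?_
    by_cases hi : σ i < j <;> simp [hi, ctr_flagFace]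
  rw [Finset.sum_congr rfl fun m hm => hSm m (Finset.mem_Ici.mp hm), Finset.sum_const] at hsum
  exact (smul_eq_zero.mp hsum).resolve_left
    (Finset.card_ne_zero.mpr ⟨j, Finset.mem_Ici.mpr le_rfl⟩)

theorem sum_inv_flagMatrix_cubeConfig_eq_zero {a : ℕ → ℝ} (ha : ∀ k < n, a k ≠ 0)
    {ΔX : Face n → EuclideanSpace ℝ (Fin n)} (hΔX : ∀ F, ⟪ΔX F, ctr F⟫ = 0) :
    ∑ s : Fin n → Bool, ∑ σ : Equiv.Perm (Fin n), ∑ j, ∑ i,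
      (flagMatrix (cubeConfig a) s σ)⁻¹ j i * ΔX (flagFace s σ j) i = 0 := by
  set f : (Fin n → Bool) → Equiv.Perm (Fin n) → Fin n → Fin n → ℝ :=
    fun s σ j i => signOfBool (s i) * ΔX (flagFace s σ j) i
  have hterm (s : Fin n → Bool) (σ : Equiv.Perm (Fin n)) (j i : Fin n) :
      (flagMatrix (cubeConfig a) s σ)⁻¹ j i * ΔX (flagFace s σ j) i =
        (a j)⁻¹ * ((if σ i = j then f s σ j i else 0) -
          if (σ i : ℕ) + 1 = j then f s σ j i else 0) := by
    simp only [inv_flagMatrix_cubeConfig ha, Matrix.mul_diagonal, Matrix.diagonal_mul,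
      Matrix.submatrix_apply, id, Matrix.inv_lowerOnes, Matrix.of_apply]
    split_ifs <;> ring
  have hB (j : Fin n) : ∑ s, ∑ σ : Equiv.Perm (Fin n), ∑ i,
      (if (σ i : ℕ) + 1 = j then f s σ j i else 0) = 0 := by
    rw [Finset.sum_comm]
    refine Finset.sum_eq_zero fun σ _ => ?_
    rw [Finset.sum_comm]
    refine Finset.sum_eq_zero fun i _ => ?_
    by_cases hij : (σ i : ℕ) + 1 = j
    · simpa only [hij, if_true] using
        sum_signOfBool_mul_flagFace_eq_zero (Fin.lt_def.mpr (by omega)) ΔX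
    · simp only [hij, if_false, Finset.sum_const_zero]
  have hA (j : Fin n) : ∑ s, ∑ σ : Equiv.Perm (Fin n), ∑ i,
      (if σ i = j then f s σ j i else 0) = 0 :=
    Finset.sum_eq_zero fun s _ => sum_perm_flagFace_eq_zero hΔX s j
  have hcomm (g : (Fin n → Bool) → Equiv.Perm (Fin n) → Fin n → ℝ) :
      ∑ s, ∑ σ, ∑ j, g s σ j = ∑ j, ∑ s, ∑ σ, g s σ j :=
    (Finset.sum_congr rfl fun _ _ => Finset.sum_comm).trans Finset.sum_comm
  simp only [hterm, mul_sub, Finset.sum_sub_distrib, ← Finset.mul_sum]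
  rw [hcomm, hcomm]
  simp only [← Finset.mul_sum, hA, hB, mul_zero, Finset.sum_const_zero, sub_zero]

end Cancellation

section Derivative

variable {n : ℕ}

def faceCoord (F : Face n) : (Face n → EuclideanSpace ℝ (Fin n)) →L[ℝ] (Fin n → ℝ) :=
  (PiLp.continuousLinearEquiv 2 ℝ fun _ : Fin n => ℝ).toContinuousLinearMap ∘L
    ContinuousLinearMap.proj F

theorem faceCoord_apply (F : Face n) (X : Face n → EuclideanSpace ℝ (Fin n)) :
    faceCoord F X = X F :=
  rfl

theorem hasFDerivAt_abs_det_flagMatrix {a : ℕ → ℝ} (ha : ∀ k < n, a k ≠ 0)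
    (s : Fin n → Bool) (σ : Equiv.Perm (Fin n)) :
    HasFDerivAt (fun X => |(flagMatrix X s σ).det|)
      ((∏ j : Fin n, |a j|) • ∑ j, ∑ i, (flagMatrix (cubeConfig a) s σ)⁻¹ j i •
        (ContinuousLinearMap.proj i ∘L faceCoord (flagFace s σ j))) (cubeConfig a) := by
  have hdet : (flagMatrix (cubeConfig a) s σ).det ≠ 0 := by
    rw [← abs_ne_zero, abs_det_flagMatrix_cubeConfig]
    exact Finset.prod_ne_zero_iff.mpr fun j _ => abs_ne_zero.mpr (ha j j.isLt)
  rw [← abs_det_flagMatrix_cubeConfig a s σ]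
  exact hasFDerivAt_abs_det_columns (fun j => faceCoord (flagFace s σ j))
    (x := cubeConfig a) hdet

end Derivative

theorem kernel_of_differential_general (n : ℕ) (a : ℕ → ℝ)
    (ha : ∀ k, k < n → 0 < a k) :
    DifferentiableAt ℝ (gvol n) (fun F => a (faceDim F) • ctr F) ∧
      ∀ ΔX : Face n → EuclideanSpace ℝ (Fin n),
        (∀ F : Face n, ⟪ΔX F, ctr F⟫ = 0) →
        fderiv ℝ (gvol n) (fun F => a (faceDim F) • ctr F) ΔX = 0 := by
  have ha₀ : ∀ k < n, a k ≠ 0 := fun k hk => (ha k hk).ne'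
  have hg : HasFDerivAt (gvol n) _ fun F => a (faceDim F) • ctr F :=
    (HasFDerivAt.fun_sum (u := Finset.univ) fun s _ => HasFDerivAt.fun_sum (u := Finset.univ)
      fun σ _ => hasFDerivAt_abs_det_flagMatrix ha₀ s σ).const_mul (1 / n.factorial : ℝ)
  refine ⟨hg.differentiableAt, fun ΔX hΔX => ?_⟩
  rw [hg.fderiv]
  simp only [smul_apply, _root_.sum_apply, ContinuousLinearMap.comp_apply,
    ContinuousLinearMap.proj_apply, faceCoord_apply, smul_eq_mul, ← Finset.mul_sum]
  rw [sum_inv_flagMatrix_cubeConfig_eq_zero ha₀ hΔX, mul_zero, mul_zero]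

/-- Lemma 4. -/
theorem kernel_of_differential (n : ℕ) (hn : 1 ≤ n) (a : ℕ → ℝ)
    (ha : ∀ k, k < n → 0 < a k) :
    DifferentiableAt ℝ (gvol n) (fun F => a (faceDim F) • ctr F) ∧
      ∀ ΔX : Face n → EuclideanSpace ℝ (Fin n),
        (∀ F : Face n, ⟪ΔX F, ctr F⟫ = 0) →
        fderiv ℝ (gvol n) (fun F => a (faceDim F) • ctr F) ΔX = 0 :=
  kernel_of_differential_general n a ha
end
end

section
/- For each nonempty proper face F of B∞ⁿ let α_F > 0 be given, and set y_F = α_F·c_F and y*_F = α_F⁻¹·c_F/(n − dim F). Let Q = ⋃_𝔽 conv{0, y_{F₀}, y_{F₁}, …, y_{F_{n−1}}} and Q' = ⋃_𝔽 conv{0, y*_{F₀}, y*_{F₁}, …, y*_{F_{n−1}}}, where the unions run over all flags 𝔽 = (F₀ ⊂ ⋯ ⊂ F_{n−1}) of faces of the cube. Then volₙ(Q)·volₙ(Q') ≥ volₙ(B∞ⁿ)·volₙ(B₁ⁿ) = 4ⁿ/n!. -/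
/-!
Flags of the cube are coded by a sign pattern `s` and the order `σ` in which coordinates are set
to zero. The simplex `conv{0, β_{F₀} c_{F₀}, …, β_{F_{n-1}} c_{F_{n-1}}}` of the flag `(s, σ)` is
the image of the corner simplex `Δ = conv{0, e₁, …, eₙ}` under a signed permutation of a
unitriangular matrix with columns scaled by the `β_{F_j}`, so its volume is `∏ⱼ β_{F_j} · vol Δ`.
It lies in the cone where the signed coordinates `sᵢ xᵢ` are nonnegative and increase along `σ`,
and distinct cones meet in a hyperplane; hence the volume of a star polytope is `vol Δ` times the
sum over flags of these products. As `dim F_j = j`, this gives `vol Q = vol Δ · ∑ a` and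
`vol Q' = vol Δ · ∑ a⁻¹ / n!` with `a = ∏ⱼ α_{F_j}`. With all weights `1` the polytope contains
the cube (sort the `|xᵢ|`), whence `vol Δ ≥ 1/n!`, and Cauchy–Schwarz over the `2ⁿ n!` flags
gives `(∑ a)(∑ a⁻¹) ≥ (2ⁿ n!)²`.
-/

open MeasureTheory RealInnerProductSpace ENNReal Pointwise

noncomputable section

theorem sum_smul_mem_convexHull_insert_zero {ι E : Type*} [Fintype ι] [AddCommGroup E]
    [Module ℝ E] (v : ι → E) {t : ι → ℝ} (ht : ∀ i, 0 ≤ t i) (ht1 : ∑ i, t i ≤ 1) :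
    ∑ i, t i • v i ∈ convexHull ℝ (insert 0 (Set.range v)) := by
  have := (convex_convexHull ℝ (insert 0 (Set.range v))).sum_mem
    (t := Finset.univ) (w := fun o : Option ι => o.elim (1 - ∑ i, t i) t)
    (z := fun o => o.elim 0 v) (fun o _ => by cases o <;> simp [ht, ht1])
    (by simp [Fintype.sum_option])
    (fun o _ => subset_convexHull ℝ _ (by cases o <;> simp))
  simpa [Fintype.sum_option] using this

theorem Module.Basis.det_constr {ι R M : Type*} [Fintype ι] [DecidableEq ι] [CommRing R]
    [AddCommGroup M] [Module R M] (b : Module.Basis ι R M) (v : ι → M) :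
    LinearMap.det (b.constr R v) = b.det v := by
  rw [← LinearMap.det_toMatrix b, b.det_apply, b.toMatrix_eq_toMatrix_constr]
  rfl

theorem Module.Basis.addHaar_convexHull_insert_zero {ι E : Type*} [Fintype ι] [DecidableEq ι]
    [NormedAddCommGroup E] [NormedSpace ℝ E] [MeasurableSpace E] [BorelSpace E]
    [FiniteDimensional ℝ E] (μ : Measure E) [μ.IsAddHaarMeasure] (b : Module.Basis ι ℝ E)
    (v : ι → E) :
    μ (convexHull ℝ (insert 0 (Set.range v))) =
      ENNReal.ofReal |b.det v| * μ (convexHull ℝ (insert 0 (Set.range b))) := by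
  have himage : b.constr ℝ v '' convexHull ℝ (insert 0 (Set.range b)) =
      convexHull ℝ (insert 0 (Set.range v)) := by
    rw [LinearMap.image_convexHull, Set.image_insert_eq, map_zero, ← Set.range_comp]
    simp [Function.comp_def, b.constr_basis]
  rw [← himage, Measure.addHaar_image_linearMap, b.det_constr]

theorem MeasureTheory.Measure.addHaar_ker_eq_zero {E : Type*} [NormedAddCommGroup E]
    [NormedSpace ℝ E] [MeasurableSpace E] [BorelSpace E] [FiniteDimensional ℝ E] (μ : Measure E)
    [μ.IsAddHaarMeasure] {f : E →ₗ[ℝ] ℝ} (hf : f ≠ 0) : μ (LinearMap.ker f) = 0 :=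
  Measure.addHaar_submodule μ _ (mt LinearMap.ker_eq_top.1 hf)

theorem Equiv.Perm.exists_inversion_of_ne {n : ℕ} {σ τ : Equiv.Perm (Fin n)} (h : σ ≠ τ) :
    ∃ i i', σ i < σ i' ∧ τ i' < τ i := by
  by_contra! hc
  refine h (mul_inv_eq_one.1 ((τ * σ⁻¹).monotone_iff.1 fun a b hab => ?_)).symm
  rcases hab.lt_or_eq with hab | rfl
  · simpa using hc (σ⁻¹ a) (σ⁻¹ b) (by simpa using hab)
  · rfl

theorem sq_card_le_sum_mul_sum_inv {ι R : Type*} [Field R] [LinearOrder R]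
    [IsStrictOrderedRing R] (s : Finset ι) {a : ι → R} (ha : ∀ i ∈ s, 0 < a i) :
    (s.card : R) ^ 2 ≤ (∑ i ∈ s, a i) * ∑ i ∈ s, (a i)⁻¹ := by
  rcases s.eq_empty_or_nonempty with rfl | hs
  · simp
  have := Finset.sq_sum_div_le_sum_sq_div s (fun _ => (1 : R)) ha
  rw [div_le_iff₀ (Finset.sum_pos ha hs)] at this
  simpa [mul_comm] using this

theorem exists_nonneg_increments_of_monotone :
    ∀ {n : ℕ} {c : ℝ} (w : Fin n → ℝ), Monotone w → (∀ k, 0 ≤ w k) → (∀ k, w k ≤ c) → 0 ≤ c →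
      ∃ u : Fin n → ℝ, (∀ j, 0 ≤ u j) ∧ ∑ j, u j ≤ c ∧
        ∀ k, ∑ j, (if k < j then 0 else u j) = w k
  | 0, _, _, _, _, _, hc => ⟨Fin.elim0, Fin.rec0, by simpa using hc, Fin.rec0⟩
  | n + 1, c, w, hw, hw0, hwc, _ => by
    obtain ⟨u, hu0, huc, hu⟩ := exists_nonneg_increments_of_monotone (c := c - w 0)
      (fun k => w k.succ - w 0) (fun a b hab => by simpa using hw (Fin.succ_le_succ_iff.2 hab))
      (fun k => sub_nonneg.2 (hw (Fin.zero_le _))) (fun k => by simpa using hwc k.succ)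
      (sub_nonneg.2 (hwc 0))
    refine ⟨Fin.cons (w 0) u, Fin.cases (hw0 0) hu0, ?_, Fin.cases ?_ fun k => ?_⟩
    · rw [Fin.sum_cons]
      linarith
    · simp [Fin.sum_univ_succ, Fin.succ_pos]
    · simp [Fin.sum_univ_succ, Fin.succ_lt_succ_iff, hu]

def boolSign (b : Bool) : ℝ := if b then 1 else -1

@[simp]
theorem boolSign_mul_self (b : Bool) : boolSign b * boolSign b = 1 := by
  cases b <;> norm_num [boolSign]

theorem abs_boolSign (b : Bool) : |boolSign b| = 1 := by
  cases b <;> norm_num [boolSign]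

theorem boolSign_ne_zero (b : Bool) : boolSign b ≠ 0 := by
  cases b <;> norm_num [boolSign]

theorem abs_mul_boolSign_decide_nonneg (a : ℝ) : |a| * boolSign (decide (0 ≤ a)) = a := by
  by_cases h : 0 ≤ a
  · simp [boolSign, h, abs_of_nonneg h]
  · simp [boolSign, h, abs_of_neg (not_le.1 h)]

abbrev FlagCode (n : ℕ) : Type := (Fin n → Bool) × Equiv.Perm (Fin n)

section Flags

variable {n : ℕ}

theorem card_flagCode : Fintype.card (FlagCode n) = 2 ^ n * n.factorial := by
  simp [FlagCode, Fintype.card_perm]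

theorem ctr_flagFace_apply (s : Fin n → Bool) (σ : Equiv.Perm (Fin n)) (j i : Fin n) :
    ctr (flagFace s σ j) i = if σ i < j then 0 else boolSign (s i) := by
  simp only [ctr, flagFace, flagVec, boolSign, Fin.val_fin_lt]
  split_ifs <;> simp

theorem flagVec_eq_zero_iff (s : Fin n → Bool) (σ : Equiv.Perm (Fin n)) (j i : Fin n) :
    flagVec s σ j i = 0 ↔ σ i < j := by
  unfold flagVec
  split_ifs <;> simp_all

def flagSimplex (x : Face n → EuclideanSpace ℝ (Fin n)) (p : FlagCode n) :
    Set (EuclideanSpace ℝ (Fin n)) :=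
  convexHull ℝ (insert 0 (Set.range fun j => x (flagFace p.1 p.2 j)))

theorem starPoly_eq_iUnion_flagSimplex (x : Face n → EuclideanSpace ℝ (Fin n)) :
    starPoly x = ⋃ p : FlagCode n, flagSimplex x p :=
  (Set.iUnion_prod' (flagSimplex x)).symm

variable (n) in
def stdCorner : Set (EuclideanSpace ℝ (Fin n)) :=
  convexHull ℝ (insert 0 (Set.range (EuclideanSpace.basisFun (Fin n) ℝ)))

theorem volume_stdCorner_ne_top : volume (stdCorner n) ≠ ⊤ :=
  ((Set.finite_range _).insert 0).isCompact_convexHull (𝕜 := ℝ) |>.measure_lt_top.ne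

theorem det_ctr_flagFace (s : Fin n → Bool) (σ : Equiv.Perm (Fin n)) :
    (EuclideanSpace.basisFun (Fin n) ℝ).toBasis.det (fun j => ctr (flagFace s σ j)) =
      (∏ i, boolSign (s i)) * Equiv.Perm.sign σ := by
  let L : Matrix (Fin n) (Fin n) ℝ := Matrix.of fun a j => if a < j then 0 else 1
  have hL : L.det = 1 := by
    rw [Matrix.det_of_isLowerTriangular L fun a j h => if_pos h]
    simp [L]
  have : (EuclideanSpace.basisFun (Fin n) ℝ).toBasis.toMatrix (fun j => ctr (flagFace s σ j)) =
      Matrix.of fun i j => boolSign (s i) * L.submatrix σ id i j := by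
    ext i j
    simp [Module.Basis.toMatrix_apply, ctr_flagFace_apply, L]
  rw [Module.Basis.det_apply, this, Matrix.det_mul_column, Matrix.det_permute, hL, mul_one]

theorem volume_flagSimplex {β : Face n → ℝ} (hβ : ∀ F, 0 ≤ β F) (p : FlagCode n) :
    volume (flagSimplex (fun F => β F • ctr F) p) =
      ENNReal.ofReal ((∏ j, β (flagFace p.1 p.2 j)) * volume.real (stdCorner n)) := by
  have hsign : |((Equiv.Perm.sign p.2 : ℤ) : ℝ)| = 1 := by
    rcases Int.units_eq_one_or (Equiv.Perm.sign p.2) with h | h <;> simp [h]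
  rw [flagSimplex,
    (EuclideanSpace.basisFun (Fin n) ℝ).toBasis.addHaar_convexHull_insert_zero volume,
    AlternatingMap.map_smul_univ, det_ctr_flagFace, OrthonormalBasis.coe_toBasis, ← stdCorner,
    ← ofReal_measureReal volume_stdCorner_ne_top, ← ENNReal.ofReal_mul (abs_nonneg _)]
  simp [abs_mul, Finset.abs_prod, abs_boolSign, hsign, abs_of_nonneg (hβ _)]

def flagCone (p : FlagCode n) : Set (EuclideanSpace ℝ (Fin n)) :=
  {x | (∀ i, 0 ≤ boolSign (p.1 i) * x i) ∧
    ∀ i i', p.2 i ≤ p.2 i' → boolSign (p.1 i) * x i ≤ boolSign (p.1 i') * x i'}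

theorem convex_flagCone (p : FlagCode n) : Convex ℝ (flagCone p) := by
  intro x hx y hy a b ha hb _
  have hcomb : ∀ i, boolSign (p.1 i) * (a • x + b • y) i =
      a * (boolSign (p.1 i) * x i) + b * (boolSign (p.1 i) * y i) := fun i => by
    simp only [PiLp.add_apply, PiLp.smul_apply, smul_eq_mul]; ring
  refine ⟨fun i => ?_, fun i i' h => ?_⟩ <;> rw [hcomb]
  · exact add_nonneg (mul_nonneg ha (hx.1 i)) (mul_nonneg hb (hy.1 i))
  · rw [hcomb]
    exact add_le_add (mul_le_mul_of_nonneg_left (hx.2 i i' h) ha)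
      (mul_le_mul_of_nonneg_left (hy.2 i i' h) hb)

theorem boolSign_mul_smul_ctr_flagFace_apply (s : Fin n → Bool) (σ : Equiv.Perm (Fin n))
    (c : ℝ) (j i : Fin n) :
    boolSign (s i) * (c • ctr (flagFace s σ j)) i = if σ i < j then 0 else c := by
  rw [PiLp.smul_apply, ctr_flagFace_apply, smul_eq_mul]
  split_ifs
  · ring
  · linear_combination c * boolSign_mul_self (s i)

theorem flagSimplex_subset_flagCone {β : Face n → ℝ} (hβ : ∀ F, 0 ≤ β F) (p : FlagCode n) :
    flagSimplex (fun F => β F • ctr F) p ⊆ flagCone p := by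
  refine convexHull_min ?_ (convex_flagCone p)
  rintro _ (rfl | ⟨j, rfl⟩)
  · simp [flagCone]
  · refine ⟨fun i => ?_, fun i i' h => ?_⟩ <;> simp only [boolSign_mul_smul_ctr_flagFace_apply]
    · split_ifs <;> simp [hβ]
    · split_ifs <;> first | rfl | exact hβ _ | exact absurd (h.trans_lt ‹_›) ‹_›

theorem volume_flagCone_inter {p q : FlagCode n} (hpq : p ≠ q) :
    volume (flagCone p ∩ flagCone q) = 0 := by
  obtain ⟨s, σ⟩ := p
  obtain ⟨s', σ'⟩ := q
  by_cases hs : s = s'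
  · subst hs
    obtain ⟨i, i', hσ, hσ'⟩ := Equiv.Perm.exists_inversion_of_ne fun h => hpq (Prod.ext rfl h)
    have hii' : i ≠ i' := by rintro rfl; exact hσ.ne rfl
    let f : EuclideanSpace ℝ (Fin n) →ₗ[ℝ] ℝ :=
      boolSign (s i) • (EuclideanSpace.proj i : _ →L[ℝ] ℝ).toLinearMap -
        boolSign (s i') • (EuclideanSpace.proj i' : _ →L[ℝ] ℝ).toLinearMap
    have hf : f ≠ 0 := fun h => by
      simpa [f, hii', boolSign_ne_zero] using LinearMap.congr_fun h (EuclideanSpace.single i 1)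
    refine measure_mono_null (fun x hx => ?_) (Measure.addHaar_ker_eq_zero volume hf)
    have := le_antisymm (hx.1.2 i i' hσ.le) (hx.2.2 i' i hσ'.le)
    simp [f, this]
  · obtain ⟨i, hi⟩ := Function.ne_iff.1 hs
    let f : EuclideanSpace ℝ (Fin n) →ₗ[ℝ] ℝ := (EuclideanSpace.proj i : _ →L[ℝ] ℝ).toLinearMap
    have hf : f ≠ 0 := fun h => by
      simpa [f] using LinearMap.congr_fun h (EuclideanSpace.single i 1)
    refine measure_mono_null (fun x hx => ?_) (Measure.addHaar_ker_eq_zero volume hf)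
    have hopp : boolSign (s' i) = -boolSign (s i) := by
      revert hi; cases s i <;> cases s' i <;> simp [boolSign]
    have h0 : boolSign (s i) * x i = 0 := by
      have := hx.2.1 i
      rw [hopp] at this
      linarith [hx.1.1 i]
    simpa [f, boolSign_ne_zero] using h0

theorem volume_starPoly_smul_ctr {β : Face n → ℝ} (hβ : ∀ F, 0 ≤ β F) :
    volume (starPoly fun F => β F • ctr F) =
      ENNReal.ofReal
        ((∑ p : FlagCode n, ∏ j, β (flagFace p.1 p.2 j)) * volume.real (stdCorner n)) := by
  rw [starPoly_eq_iUnion_flagSimplex, measure_iUnion₀, tsum_fintype, Finset.sum_mul,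
    ENNReal.ofReal_sum_of_nonneg]
  · simp only [volume_flagSimplex hβ]
  · exact fun p _ => mul_nonneg (Finset.prod_nonneg fun j _ => hβ _) measureReal_nonneg
  · exact fun p q hpq => measure_mono_null (Set.inter_subset_inter
      (flagSimplex_subset_flagCone hβ p) (flagSimplex_subset_flagCone hβ q))
      (volume_flagCone_inter hpq)
  · exact fun p => ((Set.finite_range _).insert 0).isCompact_convexHull (𝕜 := ℝ)
      |>.isClosed.measurableSet.nullMeasurableSet

theorem volume_starPoly_dual {α : Face n → ℝ} (hα : ∀ F, 0 ≤ α F) :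
    volume (starPoly fun F => (α F)⁻¹ • (((n - faceDim F : ℕ) : ℝ)⁻¹ • ctr F)) =
      ENNReal.ofReal ((∑ p : FlagCode n, (∏ j, α (flagFace p.1 p.2 j))⁻¹) *
        (n.factorial : ℝ)⁻¹ * volume.real (stdCorner n)) := by
  simp_rw [smul_smul]
  rw [volume_starPoly_smul_ctr fun F => mul_nonneg (inv_nonneg.2 (hα F)) (by positivity)]
  simp_rw [faceDim_flagFace, Finset.prod_mul_distrib, Finset.prod_inv_distrib, ← Nat.cast_prod,
    Fin.prod_univ_eq_prod_range (n - ·), ← Nat.descFactorial_eq_prod_range,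
    Nat.descFactorial_self, Finset.sum_mul]

theorem cube_subset_starPoly_ctr :
    {x : EuclideanSpace ℝ (Fin n) | ∀ i, |x i| ≤ 1} ⊆ starPoly ctr := by
  intro x hx
  set s : Fin n → Bool := fun i => decide (0 ≤ x i)
  set τ := Tuple.sort fun i => |x i|
  obtain ⟨u, hu0, hu1, hu⟩ := exists_nonneg_increments_of_monotone (fun k => |x (τ k)|)
    (Tuple.monotone_sort fun i => |x i|) (fun _ => abs_nonneg _) (fun _ => hx _) zero_le_one
  have hx_eq : x = ∑ j, u j • ctr (flagFace s τ⁻¹ j) := by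
    ext i
    calc x i = |x (τ (τ⁻¹ i))| * boolSign (s i) := by simp [s, abs_mul_boolSign_decide_nonneg]
      _ = ∑ j, (if τ⁻¹ i < j then 0 else u j) * boolSign (s i) := by rw [← hu, Finset.sum_mul]
      _ = (∑ j, u j • ctr (flagFace s τ⁻¹ j)) i := by
        simp only [WithLp.ofLp_sum, Finset.sum_apply, PiLp.smul_apply, ctr_flagFace_apply,
          smul_eq_mul, ite_mul, zero_mul, mul_ite, mul_zero]
  rw [starPoly_eq_iUnion_flagSimplex, Set.mem_iUnion]
  refine ⟨(s, τ⁻¹), ?_⟩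
  rw [hx_eq]
  exact sum_smul_mem_convexHull_insert_zero (fun j => ctr (flagFace s τ⁻¹ j)) hu0 hu1

variable (n) in
theorem volume_cube : volume {x : EuclideanSpace ℝ (Fin n) | ∀ i, |x i| ≤ 1} = 2 ^ n := by
  have hcube : {x : EuclideanSpace ℝ (Fin n) | ∀ i, |x i| ≤ 1} =
      (MeasurableEquiv.toLp 2 (Fin n → ℝ)).symm ⁻¹' Set.Icc (-1) 1 := by
    ext x
    simp [abs_le, Pi.le_def, forall_and]
  rw [hcube, (EuclideanSpace.volume_preserving_symm_measurableEquiv_toLp (Fin n)).measure_preimage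
    measurableSet_Icc.nullMeasurableSet, Real.volume_Icc_pi]
  norm_num

variable (n) in
theorem inv_factorial_le_volume_stdCorner : (n.factorial : ℝ)⁻¹ ≤ volume.real (stdCorner n) := by
  have h := measure_mono (μ := volume) (cube_subset_starPoly_ctr (n := n))
  rw [volume_cube, show starPoly ctr = starPoly fun F : Face n => (1 : ℝ) • ctr F by simp,
    volume_starPoly_smul_ctr fun _ => zero_le_one] at h
  simp only [Finset.prod_const_one, Finset.sum_const, Finset.card_univ, card_flagCode,
    nsmul_eq_mul, mul_one, Nat.cast_mul, Nat.cast_pow, Nat.cast_ofNat] at h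
  rw [show (2 : ℝ≥0∞) ^ n = ENNReal.ofReal (2 ^ n) by simp,
    ENNReal.ofReal_le_ofReal_iff (by positivity), mul_assoc] at h
  rw [inv_le_iff_one_le_mul₀' (by positivity)]
  exact le_of_mul_le_mul_left (by simpa using h) (by positivity : (0 : ℝ) < 2 ^ n)

end Flags

theorem vol_product_flag_polytopes_general (n : ℕ)
    (α : Face n → ℝ) (hα : ∀ F, 0 < α F) :
    volume (starPoly fun F => α F • ctr F) *
        volume (starPoly fun F => (α F)⁻¹ • (((n - faceDim F : ℕ) : ℝ)⁻¹ • ctr F)) ≥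
      (4 : ℝ≥0∞) ^ n / (n.factorial : ℝ≥0∞) := by
  set a : FlagCode n → ℝ := fun p => ∏ j, α (flagFace p.1 p.2 j)
  set N : ℝ := (n.factorial : ℝ)
  set V := volume.real (stdCorner n)
  have ha : ∀ p, 0 < a p := fun p => Finset.prod_pos fun j _ => hα _
  have hcauchy : (2 ^ n * N) ^ 2 ≤ (∑ p, a p) * ∑ p, (a p)⁻¹ := by
    simpa [Fintype.card_perm, N] using sq_card_le_sum_mul_sum_inv Finset.univ fun p _ => ha p
  have hV : N⁻¹ ≤ V := inv_factorial_le_volume_stdCorner n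
  rw [volume_starPoly_smul_ctr fun F => (hα F).le, volume_starPoly_dual fun F => (hα F).le,
    ge_iff_le, ← ENNReal.ofReal_mul
      (mul_nonneg (Finset.sum_nonneg fun p _ => (ha p).le) measureReal_nonneg),
    show (4 : ℝ≥0∞) ^ n / n.factorial = ENNReal.ofReal (4 ^ n / N) by
      rw [ENNReal.ofReal_div_of_pos (by positivity)]; simp [N]]
  refine ENNReal.ofReal_le_ofReal ?_
  have hprod_nonneg : 0 ≤ (∑ p, a p) * ∑ p, (a p)⁻¹ := (sq_nonneg _).trans hcauchy
  calc (4 : ℝ) ^ n / N = (2 ^ n * N) ^ 2 * N⁻¹ * (N⁻¹ * N⁻¹) := by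
        rw [show (4 : ℝ) = 2 ^ 2 by norm_num, ← pow_mul, mul_comm 2 n, pow_mul]
        field_simp
    _ ≤ ((∑ p, a p) * ∑ p, (a p)⁻¹) * N⁻¹ * (V * V) := by gcongr
    _ = _ := by ring

/-- Lemma 7: for any positive weights `α_F` with `y_F = α_F·c_F` and
`y*_F = α_F⁻¹·c_F/(n − dim F)`, the polytopes `Q = ⋃_𝔽 conv{0, y_{F₀}, …, y_{F_{n−1}}}`
and `Q' = ⋃_𝔽 conv{0, y*_{F₀}, …, y*_{F_{n−1}}}` satisfy
`volₙ(Q)·volₙ(Q') ≥ 4ⁿ/n!`. -/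
theorem vol_product_flag_polytopes (n : ℕ) (hn : 1 ≤ n)
    (α : Face n → ℝ) (hα : ∀ F, 0 < α F) :
    volume (starPoly fun F => α F • ctr F) *
        volume (starPoly fun F => (α F)⁻¹ • (((n - faceDim F : ℕ) : ℝ)⁻¹ • ctr F)) ≥
      (4 : ℝ≥0∞) ^ n / (n.factorial : ℝ≥0∞) :=
  vol_product_flag_polytopes_general n α hα
end
end

section
/- Let n ≥ 1 and 0 ≤ δ′ < 1. Suppose that for each sign vector s ∈ {−1,1}ⁿ a point x_s ∈ ℝⁿ is given with s_j·(x_s)_j ≥ 1 − δ′ for every j = 1,…,n. Then the convex hull D = conv{x_s : s ∈ {−1,1}ⁿ} contains the cube (1−δ′)·B∞ⁿ. -/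
open MeasureTheory RealInnerProductSpace ENNReal Pointwise

noncomputable section

/-- The sign `±1` associated with a boolean. -/
def sgn (b : Bool) : ℝ := if b then 1 else -1

/-!
Fix the coordinates of the target point `t` one at a time, keeping for every sign pattern `s`
a point of the convex set that agrees with `t` on the fixed coordinates and lies in the corner
region of `s` in the free ones. To fix coordinate `i`, take the points kept for `s[i := +]` and
`s[i := -]`: their `i`-th coordinates are `≥ r ≥ tᵢ` and `≤ -r ≤ tᵢ`, so some point of the
segment between them has `i`-th coordinate `tᵢ`, and it still satisfies the other constraints,
which are convex.
-/

variable {E ι : Type*} [AddCommGroup E] [Module ℝ E]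

theorem LinearMap.exists_mem_segment_apply_eq (f : E →ₗ[ℝ] ℝ) {u v : E} {t : ℝ}
    (hv : f v ≤ t) (hu : t ≤ f u) : ∃ w ∈ segment ℝ u v, f w = t := by
  have ht : t ∈ segment ℝ (f u) (f v) := by
    rw [segment_eq_uIcc]
    exact Set.mem_uIcc.2 (Or.inr ⟨hv, hu⟩)
  rw [← f.coe_toAffineMap, ← image_segment] at ht
  exact ht

section Corners

variable {K : Set E} {ℓ : ι → E →ₗ[ℝ] ℝ} {r : ℝ} {t : ι → ℝ}

theorem Convex.exists_apply_eq_on_insert_of_corners [DecidableEq ι] (hK : Convex ℝ K)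
    (ht : ∀ j, |t j| ≤ r) {T : Finset ι} {i : ι} (hi : i ∉ T)
    (hT : ∀ s : ι → Bool, ∃ z ∈ K, (∀ j ∈ T, ℓ j z = t j) ∧ ∀ j ∉ T, r ≤ sgn (s j) * ℓ j z)
    (s : ι → Bool) :
    ∃ z ∈ K, (∀ j ∈ insert i T, ℓ j z = t j) ∧ ∀ j ∉ insert i T, r ≤ sgn (s j) * ℓ j z := by
  obtain ⟨u, huK, huT, hu⟩ := hT (Function.update s i true)
  obtain ⟨v, hvK, hvT, hv⟩ := hT (Function.update s i false)
  have hui : r ≤ ℓ i u := by simpa [sgn] using hu i hi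
  have hvi : ℓ i v ≤ -r := by
    have := hv i hi
    simp only [sgn, Function.update_self, Bool.false_eq_true, if_false] at this
    linarith
  obtain ⟨w, hw, hwi⟩ := (ℓ i).exists_mem_segment_apply_eq
    (hvi.trans (abs_le.1 (ht i)).1) ((abs_le.1 (ht i)).2.trans hui)
  refine ⟨w, hK.segment_subset huK hvK hw, fun j hj => ?_, fun j hj => ?_⟩
  · obtain rfl | hjT := Finset.mem_insert.1 hj
    · exact hwi
    · exact (convex_hyperplane (ℓ j).isLinear (t j)).segment_subset (huT j hjT) (hvT j hjT) hw
  · obtain ⟨hji, hjT⟩ : j ≠ i ∧ j ∉ T := by simpa [not_or] using hj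
    have hu' := hu j hjT
    have hv' := hv j hjT
    rw [Function.update_of_ne hji] at hu' hv'
    exact (convex_halfSpace_ge (sgn (s j) • ℓ j).isLinear r).segment_subset hu' hv' hw

theorem Convex.exists_apply_eq_on_of_corners (hK : Convex ℝ K)
    (hcorner : ∀ s : ι → Bool, ∃ z ∈ K, ∀ j, r ≤ sgn (s j) * ℓ j z)
    (ht : ∀ j, |t j| ≤ r) (T : Finset ι) (s : ι → Bool) :
    ∃ z ∈ K, (∀ j ∈ T, ℓ j z = t j) ∧ ∀ j ∉ T, r ≤ sgn (s j) * ℓ j z := by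
  classical
  induction T using Finset.induction_on generalizing s with
  | empty =>
    obtain ⟨z, hzK, hz⟩ := hcorner s
    exact ⟨z, hzK, by simp, fun j _ => hz j⟩
  | insert i T hi ih => exact hK.exists_apply_eq_on_insert_of_corners ht hi ih s

theorem Convex.exists_apply_eq_of_corners [Fintype ι] (hK : Convex ℝ K)
    (hcorner : ∀ s : ι → Bool, ∃ z ∈ K, ∀ j, r ≤ sgn (s j) * ℓ j z)
    (ht : ∀ j, |t j| ≤ r) : ∃ z ∈ K, ∀ j, ℓ j z = t j := by
  obtain ⟨z, hzK, hz, -⟩ :=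
    hK.exists_apply_eq_on_of_corners hcorner ht Finset.univ (fun _ => true)
  exact ⟨z, hzK, fun j => hz j (Finset.mem_univ j)⟩

end Corners

theorem corner_points_hull_contains_cube_general (n : ℕ)
    (δ' : ℝ) (hδ'1 : δ' < 1)
    (x : (Fin n → Bool) → EuclideanSpace ℝ (Fin n))
    (hx : ∀ s : Fin n → Bool, ∀ j : Fin n, 1 - δ' ≤ sgn (s j) * x s j) :
    (1 - δ') • cube n ⊆ convexHull ℝ (Set.range x) := by
  rintro _ ⟨c, hc, rfl⟩
  have hy : ∀ j, |((1 - δ') • c) j| ≤ 1 - δ' := fun j => by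
    rw [PiLp.smul_apply, smul_eq_mul, abs_mul, abs_of_pos (sub_pos.2 hδ'1)]
    exact mul_le_of_le_one_right (sub_pos.2 hδ'1).le (hc j)
  obtain ⟨z, hz, hzy⟩ := (convex_convexHull ℝ (Set.range x)).exists_apply_eq_of_corners
    (ℓ := fun j => EuclideanSpace.projₗ j)
    (fun s => ⟨x s, subset_convexHull ℝ _ ⟨s, rfl⟩, hx s⟩) hy
  rwa [show z = (1 - δ') • c from PiLp.ext hzy] at hz

/-- if for each sign vector `s ∈ {−1,1}ⁿ` a point `x_s` with
`s_j·(x_s)_j ≥ 1 − δ′` for all `j` is given, then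
`conv{x_s} ⊇ (1−δ′)·B∞ⁿ`. -/
theorem corner_points_hull_contains_cube (n : ℕ) (hn : 1 ≤ n)
    (δ' : ℝ) (hδ'0 : 0 ≤ δ') (hδ'1 : δ' < 1)
    (x : (Fin n → Bool) → EuclideanSpace ℝ (Fin n))
    (hx : ∀ s : Fin n → Bool, ∀ j : Fin n, 1 - δ' ≤ sgn (s j) * x s j) :
    (1 - δ') • cube n ⊆ convexHull ℝ (Set.range x) :=
  corner_points_hull_contains_cube_general n δ' hδ'1 x hx
end
end
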